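/- Let n ≥ 1 be a natural number and let λ : Fin n → ℝ satisfy λᵢ > 0 for all i. Then ∑ᵢ 1/λᵢ ≤ (∑ᵢ λᵢ)^{n−1} / ((n−1)! · ∏ᵢ λᵢ). -/
import Mathlib

lemma binom2 (x y : ℝ) (hx : 0 ≤ x) (hy : 0 ≤ y) (k : ℕ) :
    y ^ k + (k : ℝ) * x * y ^ (k - 1) ≤ (x + y) ^ k := by
  rcases Nat.eq_zero_or_pos k with hk | hk
  · simp [hk]
  · rw [add_pow]
    have h01 : ({0, 1} : Finset ℕ) ⊆ Finset.range (k + 1) := by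
      intro i hi
      simp only [Finset.mem_insert, Finset.mem_singleton, Finset.mem_range] at hi ⊢
      omega
    have h2 : y ^ k + (k : ℝ) * x * y ^ (k - 1)
        = ∑ i ∈ ({0, 1} : Finset ℕ), x ^ i * y ^ (k - i) * (k.choose i : ℝ) := by
      rw [Finset.sum_pair (by norm_num)]
      simp [Nat.choose_one_right]
      ring
    rw [h2]
    exact Finset.sum_le_sum_of_subset_of_nonneg h01 (fun i _ _ => by positivity)

lemma prodbound {ι : Type*} [DecidableEq ι] (s : Finset ι) (f : ι → ℝ)
    (hf : ∀ i ∈ s, 0 ≤ f i) :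
    (Nat.factorial s.card : ℝ) * ∏ i ∈ s, f i ≤ (∑ i ∈ s, f i) ^ s.card := by
  induction s using Finset.induction_on with
  | empty => simp
  | @insert a t ha ih =>
    have hfa : 0 ≤ f a := hf a (Finset.mem_insert_self a t)
    have hft : ∀ i ∈ t, 0 ≤ f i := fun i hi => hf i (Finset.mem_insert_of_mem hi)
    have hT : 0 ≤ ∑ i ∈ t, f i := Finset.sum_nonneg hft
    rw [Finset.card_insert_of_notMem ha, Finset.prod_insert ha, Finset.sum_insert ha]
    have h1 : (Nat.factorial (t.card + 1) : ℝ) * (f a * ∏ i ∈ t, f i)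
        = ((t.card : ℝ) + 1) * f a * ((Nat.factorial t.card : ℝ) * ∏ i ∈ t, f i) := by
      rw [Nat.factorial_succ]; push_cast; ring
    have h2 : ((t.card : ℝ) + 1) * f a * ((Nat.factorial t.card : ℝ) * ∏ i ∈ t, f i)
        ≤ ((t.card : ℝ) + 1) * f a * (∑ i ∈ t, f i) ^ t.card := by
      apply mul_le_mul_of_nonneg_left (ih hft) (by positivity)
    have h3 := binom2 (f a) (∑ i ∈ t, f i) hfa hT (t.card + 1)
    have hTn : 0 ≤ (∑ i ∈ t, f i) ^ (t.card + 1) := by positivity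
    simp only [Nat.add_sub_cancel] at h3
    push_cast at h3
    calc (Nat.factorial (t.card + 1) : ℝ) * (f a * ∏ i ∈ t, f i)
        ≤ ((t.card : ℝ) + 1) * f a * (∑ i ∈ t, f i) ^ t.card := by rw [h1]; exact h2
      _ ≤ (∑ i ∈ t, f i) ^ (t.card + 1) + ((t.card : ℝ) + 1) * f a * (∑ i ∈ t, f i) ^ t.card := by linarith
      _ ≤ (f a + ∑ i ∈ t, f i) ^ (t.card + 1) := h3

lemma key {ι : Type*} [DecidableEq ι] (s : Finset ι) (f : ι → ℝ)
    (hf : ∀ i ∈ s, 0 ≤ f i) :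
    (Nat.factorial (s.card - 1) : ℝ) * ∑ i ∈ s, ∏ j ∈ s.erase i, f j
      ≤ (∑ i ∈ s, f i) ^ (s.card - 1) := by
  induction s using Finset.induction_on with
  | empty => simp
  | @insert a t ha ih =>
    have hfa : 0 ≤ f a := hf a (Finset.mem_insert_self a t)
    have hft : ∀ i ∈ t, 0 ≤ f i := fun i hi => hf i (Finset.mem_insert_of_mem hi)
    have hT : 0 ≤ ∑ i ∈ t, f i := Finset.sum_nonneg hft
    have herase_a : (insert a t).erase a = t := Finset.erase_insert ha
    have hsum : ∑ i ∈ insert a t, ∏ j ∈ (insert a t).erase i, f j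
        = ∏ j ∈ t, f j + ∑ i ∈ t, f a * ∏ j ∈ t.erase i, f j := by
      rw [Finset.sum_insert ha, herase_a]
      congr 1
      apply Finset.sum_congr rfl
      intro i hi
      have hai : a ≠ i := fun h => ha (h ▸ hi)
      rw [Finset.erase_insert_of_ne hai,
        Finset.prod_insert (fun h => ha (Finset.mem_of_mem_erase h))]
    rw [Finset.card_insert_of_notMem ha, Nat.add_sub_cancel, hsum,
      Finset.sum_insert ha, mul_add]
    have hP := prodbound t f hft
    have hS : (Nat.factorial t.card : ℝ) * ∑ i ∈ t, f a * ∏ j ∈ t.erase i, f j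
        ≤ (t.card : ℝ) * f a * (∑ i ∈ t, f i) ^ (t.card - 1) := by
      rcases Nat.eq_zero_or_pos t.card with h0 | h0
      · have : t = ∅ := Finset.card_eq_zero.mp h0
        simp [this]
      · have hk : t.card - 1 + 1 = t.card := by omega
        have := ih hft
        calc (Nat.factorial t.card : ℝ) * ∑ i ∈ t, f a * ∏ j ∈ t.erase i, f j
            = (t.card : ℝ) * f a *
              ((Nat.factorial (t.card - 1) : ℝ) * ∑ i ∈ t, ∏ j ∈ t.erase i, f j) := by
              rw [← hk, Nat.factorial_succ, ← Finset.mul_sum]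
              push_cast [hk]
              ring
          _ ≤ (t.card : ℝ) * f a * (∑ i ∈ t, f i) ^ (t.card - 1) := by
              apply mul_le_mul_of_nonneg_left this (by positivity)
    have h3 := binom2 (f a) (∑ i ∈ t, f i) hfa hT t.card
    linarith

/-- Eigenvalue inequality of Proposition 7.4: for positive `λ₁,…,λₙ`,
`∑ 1/λᵢ ≤ (∑ λᵢ)^{n-1} / ((n-1)! ∏ λᵢ)`. -/
theorem stmt4 (n : ℕ) (hn : 1 ≤ n) (l : Fin n → ℝ) (hl : ∀ i, 0 < l i) :
    ∑ i, 1 / l i ≤ (∑ i, l i) ^ (n - 1) / ((Nat.factorial (n - 1) : ℝ) * ∏ i, l i) := by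
  have hP : (0 : ℝ) < ∏ i, l i := Finset.prod_pos (fun i _ => hl i)
  have hfac : (0 : ℝ) < (Nat.factorial (n - 1) : ℝ) := by positivity
  have hcard : (Finset.univ : Finset (Fin n)).card = n := Finset.card_fin n
  have hkey := key (Finset.univ : Finset (Fin n)) l (fun i _ => (hl i).le)
  rw [hcard] at hkey
  have hsum_eq : ∑ i, 1 / l i
      = (∑ i, ∏ j ∈ Finset.univ.erase i, l j) / ∏ i, l i := by
    rw [Finset.sum_div]
    apply Finset.sum_congr rfl
    intro i _
    rw [one_div, inv_eq_one_div, div_eq_div_iff (hl i).ne' hP.ne',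
      ← Finset.mul_prod_erase Finset.univ l (Finset.mem_univ i)]
    ring
  rw [hsum_eq, div_le_div_iff₀ hP (by positivity)]
  calc (∑ i, ∏ j ∈ Finset.univ.erase i, l j) * ((Nat.factorial (n - 1) : ℝ) * ∏ i, l i)
      = ((Nat.factorial (n - 1) : ℝ) * ∑ i, ∏ j ∈ Finset.univ.erase i, l j) * ∏ i, l i := by ring
    _ ≤ (∑ i, l i) ^ (n - 1) * ∏ i, l i := by
        apply mul_le_mul_of_nonneg_right hkey hP.le
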